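/- arXiv:1705.00111 — 6 statements merged into one kernel-verified Lean document; each statement's English description precedes it below -/
import Mathlib

section
/- Let c ∈ (0,1] and q ∈ (0,1), and let f_k = c q^k ∏_{i=1}^{k-1}(1 - c q^i). Then there exists α with 1 < α < q^{-1} such that ∑_{k ≥ 1} α^k f_k = 1. -/
/-! With `a i = c q^(i+1)`, which is summable and `< 1`, the partial products
`P k = ∏_{i<k} (1 - a i)` decrease to a limit `p > 0` (their logarithms form a convergent series),
and `f (k+1) = a k * P k` telescopes: `∑ f (k+1) = 1 - p < 1`. Moreover
`c q p q^k ≤ f (k+1) ≤ c q q^k`, so `F α = ∑ α^(k+1) f (k+1)` is continuous on `[1, q⁻¹)`, and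
`F α ≥ c q p / (1 - α q)` exceeds `1` near `q⁻¹`. The intermediate value theorem gives the root. -/

open Finset Filter Topology

section OneSubProducts

theorem sum_range_mul_prod_one_sub {R : Type*} [CommRing R] (a : ℕ → R) (n : ℕ) :
    ∑ k ∈ range n, a k * ∏ i ∈ range k, (1 - a i) = 1 - ∏ i ∈ range n, (1 - a i) := by
  induction n with
  | zero => simp
  | succ n ih => rw [sum_range_succ, ih, prod_range_succ]; ring

theorem Real.exists_pos_hasProd_one_sub {ι : Type*} {a : ι → ℝ} (ha : ∀ i, a i < 1)
    (hs : Summable a) : ∃ p, 0 < p ∧ HasProd (fun i ↦ 1 - a i) p := by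
  have hlog : Summable fun i ↦ Real.log (1 - a i) := by
    simpa [← sub_eq_add_neg] using Real.summable_log_one_add_of_summable hs.neg
  exact ⟨_, Real.exp_pos _, Real.hasProd_of_hasSum_log (fun i ↦ sub_pos.2 (ha i)) hlog.hasSum⟩

variable {a : ℕ → ℝ} {p : ℝ}

theorem le_prod_range_one_sub_of_hasProd (ha0 : ∀ i, 0 ≤ a i) (ha1 : ∀ i, a i ≤ 1)
    (h : HasProd (fun i ↦ 1 - a i) p) (n : ℕ) : p ≤ ∏ i ∈ range n, (1 - a i) := by
  refine Antitone.le_of_tendsto (antitone_nat_of_succ_le fun n ↦ ?_) h.tendsto_prod_nat n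
  rw [prod_range_succ]
  exact mul_le_of_le_one_right (prod_nonneg fun i _ ↦ sub_nonneg.2 (ha1 i))
    (sub_le_self 1 (ha0 n))

theorem hasSum_mul_prod_range_one_sub (ha0 : ∀ i, 0 ≤ a i) (ha1 : ∀ i, a i ≤ 1)
    (h : HasProd (fun i ↦ 1 - a i) p) :
    HasSum (fun k ↦ a k * ∏ i ∈ range k, (1 - a i)) (1 - p) := by
  refine (hasSum_iff_tendsto_nat_of_nonneg
    (fun k ↦ mul_nonneg (ha0 k) (prod_nonneg fun i _ ↦ sub_nonneg.2 (ha1 i))) _).2 ?_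
  simp_rw [sum_range_mul_prod_one_sub]
  exact tendsto_const_nhds.sub h.tendsto_prod_nat

end OneSubProducts

section PowerSeries

variable {a : ℕ → ℝ} {q : ℝ}

theorem summable_pow_succ_mul_of_le_geometric {C α : ℝ} (ha : ∀ k, 0 ≤ a k)
    (hup : ∀ k, a k ≤ C * q ^ k) (hq : 0 ≤ q) (hα : 0 ≤ α) (hαq : α * q < 1) :
    Summable fun k ↦ α ^ (k + 1) * a k := by
  refine Summable.of_nonneg_of_le (fun k ↦ mul_nonneg (pow_nonneg hα _) (ha k)) (fun k ↦ ?_)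
    ((summable_geometric_of_lt_one (by positivity) hαq).mul_left (C * α))
  calc α ^ (k + 1) * a k ≤ α ^ (k + 1) * (C * q ^ k) := by gcongr; exact hup k
    _ = C * α * (α * q) ^ k := by ring

theorem continuousOn_tsum_pow_succ_mul {r : ℝ} (ha : ∀ k, 0 ≤ a k)
    (hs : Summable fun k ↦ r ^ (k + 1) * a k) :
    ContinuousOn (fun α ↦ ∑' k, α ^ (k + 1) * a k) (Set.Icc 0 r) := by
  refine continuousOn_tsum (fun k ↦ by fun_prop) hs fun k α ⟨hα0, hαr⟩ ↦ ?_
  rw [Real.norm_of_nonneg (mul_nonneg (pow_nonneg hα0 _) (ha k))]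
  gcongr
  exact ha k

theorem div_one_sub_le_tsum_pow_succ_mul {δ r : ℝ} (ha : ∀ k, 0 ≤ a k)
    (hlow : ∀ k, δ * q ^ k ≤ a k) (hq : 0 ≤ q) (hr : 1 ≤ r) (hrq : r * q < 1)
    (hs : Summable fun k ↦ r ^ (k + 1) * a k) :
    δ / (1 - r * q) ≤ ∑' k, r ^ (k + 1) * a k := by
  have hrq0 : 0 ≤ r * q := by positivity
  rw [div_eq_mul_inv, ← tsum_geometric_of_lt_one hrq0 hrq, ← tsum_mul_left]
  refine Summable.tsum_le_tsum (fun k ↦ ?_)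
    ((summable_geometric_of_lt_one hrq0 hrq).mul_left δ) hs
  calc δ * (r * q) ^ k = r ^ k * (δ * q ^ k) := by ring
    _ ≤ r ^ k * a k := by gcongr; exact hlow k
    _ ≤ r ^ (k + 1) * a k := mul_le_mul_of_nonneg_right (pow_le_pow_right₀ hr k.le_succ) (ha k)

theorem exists_tsum_pow_succ_mul_eq_one {δ C : ℝ} (hq : 0 < q) (hq1 : q < 1) (hδ : 0 < δ)
    (hlow : ∀ k, δ * q ^ k ≤ a k) (hup : ∀ k, a k ≤ C * q ^ k) (h1 : ∑' k, a k < 1) :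
    ∃ α, 1 < α ∧ α < q⁻¹ ∧ ∑' k, α ^ (k + 1) * a k = 1 := by
  have ha k : 0 ≤ a k := (by positivity : 0 ≤ δ * q ^ k).trans (hlow k)
  -- `x = r q` lies above `1 - δ`, so the geometric lower bound `δ / (1 - x)` of the series at `r`
  -- exceeds `1`.
  obtain ⟨x, hx, hx1⟩ := exists_between (max_lt hq1 (sub_lt_self 1 hδ))
  obtain ⟨hqx, hδx⟩ := max_lt_iff.1 hx
  set r := x / q
  have hrq : r * q = x := div_mul_cancel₀ x hq.ne'
  have hr : 1 < r := (one_lt_div hq).2 hqx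
  have hs : Summable fun k ↦ r ^ (k + 1) * a k :=
    summable_pow_succ_mul_of_le_geometric ha hup hq.le (by positivity) (hrq ▸ hx1)
  have hFr : 1 < ∑' k, r ^ (k + 1) * a k := by
    refine lt_of_lt_of_le ?_ (div_one_sub_le_tsum_pow_succ_mul ha hlow hq.le hr.le (hrq ▸ hx1) hs)
    rw [hrq, one_lt_div (by linarith)]
    linarith
  have hF1 : ∑' k, (1 : ℝ) ^ (k + 1) * a k < 1 := by simpa using h1
  obtain ⟨α, ⟨hα1, hαr⟩, hα⟩ := intermediate_value_Ioo hr.le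
    ((continuousOn_tsum_pow_succ_mul ha hs).mono (Set.Icc_subset_Icc zero_le_one le_rfl))
    ⟨hF1, hFr⟩
  have hrq_inv : r < q⁻¹ := by
    rw [← one_div]
    exact div_lt_div_of_pos_right hx1 hq
  exact ⟨α, hα1, hαr.trans hrq_inv, hα⟩

end PowerSeries

theorem stmt_4 (c q : ℝ) (hc : 0 < c) (hc1 : c ≤ 1) (hq : 0 < q) (hq1 : q < 1)
    (f : ℕ → ℝ) (hf : ∀ k, f k = c * q ^ k * ∏ i ∈ Finset.Icc 1 (k - 1), (1 - c * q ^ i)) :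
    ∃ α : ℝ, 1 < α ∧ α < q⁻¹ ∧ ∑' k : ℕ, α ^ (k + 1) * f (k + 1) = 1 := by
  set a : ℕ → ℝ := fun i ↦ c * q ^ (i + 1)
  have ha0 i : 0 ≤ a i := by positivity
  have ha1 i : a i < 1 := calc
    c * q ^ (i + 1) ≤ 1 * q ^ (i + 1) := by gcongr
    _ < 1 := by rw [one_mul]; exact pow_lt_one₀ hq.le hq1 i.succ_ne_zero
  have hs : Summable a := (summable_geometric_of_lt_one hq.le hq1).mul_left (c * q) |>.congr
    fun i ↦ by simp only [a, pow_succ]; ring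
  obtain ⟨p, hp, hprod⟩ := Real.exists_pos_hasProd_one_sub ha1 hs
  have hfa k : f (k + 1) = a k * ∏ i ∈ range k, (1 - a i) := by
    rw [hf, Nat.add_sub_cancel, ← Ico_add_one_right_eq_Icc, prod_Ico_eq_prod_range]
    simp only [a, add_tsub_cancel_right, add_comm 1]
  simp_rw [hfa]
  refine exists_tsum_pow_succ_mul_eq_one hq hq1 (δ := c * q * p) (C := c * q)
    (by positivity) (fun k ↦ ?_) (fun k ↦ ?_) ?_
  · calc c * q * p * q ^ k = a k * p := by simp only [a, pow_succ]; ring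
      _ ≤ a k * ∏ i ∈ range k, (1 - a i) :=
        mul_le_mul_of_nonneg_left
          (le_prod_range_one_sub_of_hasProd ha0 (ha1 · |>.le) hprod k) (ha0 k)
  · calc a k * ∏ i ∈ range k, (1 - a i) ≤ a k * 1 :=
        mul_le_mul_of_nonneg_left (prod_le_one (fun i _ ↦ sub_nonneg.2 (ha1 i).le)
          fun i _ ↦ sub_le_self 1 (ha0 i)) (ha0 k)
      _ = c * q * q ^ k := by simp only [a, pow_succ]; ring
  · rw [(hasSum_mul_prod_range_one_sub ha0 (ha1 · |>.le) hprod).tsum_eq]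
    linarith
end

section
/- Let c ∈ (0,1] and q ∈ (0,1) with d q < 1 for some real d ≥ 2. If c d q + (1 - c q) c (dq)²/(1 - dq) ≥ 1, then d ≥ (c+1)(1 − √(1 − 4 q c²/(c+1)²)) / (2 q² c²). -/
theorem stmt_9 (c q d : ℝ) (hc : 0 < c) (hc1 : c ≤ 1) (hq : 0 < q) (hq1 : q < 1)
    (hd : 2 ≤ d) (hdq : d * q < 1)
    (hsqrt : 4 * q * c ^ 2 / (c + 1) ^ 2 ≤ 1)
    (h : 1 ≤ c * d * q + (1 - c * q) * c * ((d * q) ^ 2 / (1 - d * q))) :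
    (c + 1) * (1 - Real.sqrt (1 - 4 * q * c ^ 2 / (c + 1) ^ 2)) / (2 * q ^ 2 * c ^ 2) ≤ d := by
  have h1x : (0:ℝ) < 1 - d * q := by linarith
  have hc1pos : (0:ℝ) < c + 1 := by linarith
  -- clear the denominator in h
  have hx : q * c ^ 2 * (d * q) ^ 2 - (c + 1) * (d * q) + 1 ≤ 0 := by
    have hy : (d * q) ^ 2 / (1 - d * q) * (1 - d * q) = (d * q) ^ 2 :=
      div_mul_cancel₀ _ (ne_of_gt h1x)
    have h2 := mul_le_mul_of_nonneg_right h h1x.le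
    have h3 : (c * d * q + (1 - c * q) * c * ((d * q) ^ 2 / (1 - d * q))) * (1 - d * q)
        = c * d * q * (1 - d * q) + (1 - c * q) * c * (d * q) ^ 2 := by
      field_simp
    rw [h3] at h2
    nlinarith [h2]
  have key : ((c + 1) - 2 * (q * c ^ 2) * (d * q)) ^ 2 ≤ (c + 1) ^ 2 - 4 * (q * c ^ 2) := by
    nlinarith [mul_le_mul_of_nonneg_left hx (by positivity : (0:ℝ) ≤ q * c ^ 2)]
  have hA : (c + 1) ^ 2 - 4 * (q * c ^ 2) = (c + 1) ^ 2 * (1 - 4 * q * c ^ 2 / (c + 1) ^ 2) := by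
    field_simp
  have hs : (c + 1) - 2 * (q * c ^ 2) * (d * q) ≤
      (c + 1) * Real.sqrt (1 - 4 * q * c ^ 2 / (c + 1) ^ 2) := by
    have h2 : (c + 1) - 2 * (q * c ^ 2) * (d * q) ≤
        Real.sqrt ((c + 1) ^ 2 - 4 * (q * c ^ 2)) := by
      calc (c + 1) - 2 * (q * c ^ 2) * (d * q)
          ≤ |(c + 1) - 2 * (q * c ^ 2) * (d * q)| := le_abs_self _
        _ = Real.sqrt (((c + 1) - 2 * (q * c ^ 2) * (d * q)) ^ 2) :=
            (Real.sqrt_sq_eq_abs _).symm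
        _ ≤ Real.sqrt ((c + 1) ^ 2 - 4 * (q * c ^ 2)) := Real.sqrt_le_sqrt key
    rw [hA, Real.sqrt_mul (sq_nonneg _), Real.sqrt_sq hc1pos.le] at h2
    exact h2
  have hden : (0:ℝ) < 2 * q ^ 2 * c ^ 2 := by positivity
  rw [div_le_iff₀ hden]
  nlinarith [hs]
end

section
/- Let c ∈ (0,1] and q ∈ (0,1) with d q < 1 for some real d ≥ 2. If c d q + (1 - c q - c q²) c (dq)²/(1 - dq) ≤ 1, then d ≤ (c+1)(1 − √(1 − 4 c² q(q+1)/(c+1)²)) / (2 c² q² (q+1)). -/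
theorem stmt_10 (c q d : ℝ) (hc : 0 < c) (hc1 : c ≤ 1) (hq : 0 < q) (hq1 : q < 1)
    (hd : 2 ≤ d) (hdq : d * q < 1)
    (hsqrt : 4 * c ^ 2 * q * (q + 1) / (c + 1) ^ 2 ≤ 1)
    (h : c * d * q + (1 - c * q - c * q ^ 2) * c * ((d * q) ^ 2 / (1 - d * q)) ≤ 1) :
    d ≤ (c + 1) * (1 - Real.sqrt (1 - 4 * c ^ 2 * q * (q + 1) / (c + 1) ^ 2)) /
      (2 * c ^ 2 * q ^ 2 * (q + 1)) := by
  have hB0 : (0:ℝ) < c + 1 := by linarith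
  have hq2 : q < 1/2 := by nlinarith
  have hx0 : 0 < d * q := by nlinarith
  have h1 : 0 < 1 - d * q := by linarith
  have ht : (d*q)^2/(1-d*q) * (1 - d*q) = (d*q)^2 := div_mul_cancel₀ _ (ne_of_gt h1)
  have hA0 : 0 < c^2*q*(q+1) := by positivity
  have hf : 0 ≤ (c^2*q*(q+1)) * (d*q)^2 - (c+1)*(d*q) + 1 := by
    nlinarith [mul_le_mul_of_nonneg_right h (le_of_lt h1)]
  have hD : 0 ≤ (c+1)^2 - 4*(c^2*q*(q+1)) := by
    rw [div_le_one (by positivity)] at hsqrt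
    linarith
  have hcq : c*q*(q+1) < 3/4 := by nlinarith
  have hAc : c^2*q*(q+1) < c := by nlinarith [mul_lt_mul_of_pos_left hcq hc]
  have h2A : 2*(c^2*q*(q+1))*(d*q) < c + 1 := by nlinarith
  have hs : Real.sqrt ((c+1)^2 - 4*(c^2*q*(q+1))) ≤ (c+1) - 2*(c^2*q*(q+1))*(d*q) := by
    rw [show (c+1) - 2*(c^2*q*(q+1))*(d*q)
        = Real.sqrt (((c+1) - 2*(c^2*q*(q+1))*(d*q))^2) from
        (Real.sqrt_sq (by linarith)).symm]
    apply Real.sqrt_le_sqrt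
    nlinarith [mul_nonneg hA0.le hf]
  have hrw : 1 - 4 * c ^ 2 * q * (q + 1) / (c + 1) ^ 2
      = ((c+1)^2 - 4*(c^2*q*(q+1))) / (c+1)^2 := by
    field_simp
  have hrw2 : Real.sqrt (((c+1)^2 - 4*(c^2*q*(q+1))) / (c+1)^2)
      = Real.sqrt ((c+1)^2 - 4*(c^2*q*(q+1))) / (c+1) := by
    rw [Real.sqrt_div hD, Real.sqrt_sq hB0.le]
  rw [hrw, hrw2, le_div_iff₀ (by positivity)]
  have hgoal : (c+1) * (1 - Real.sqrt ((c+1)^2 - 4*(c^2*q*(q+1))) / (c+1))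
      = (c+1) - Real.sqrt ((c+1)^2 - 4*(c^2*q*(q+1))) := by
    field_simp
  rw [hgoal]
  have hid : d * (2 * c ^ 2 * q ^ 2 * (q + 1)) = 2*(c^2*q*(q+1))*(d*q) := by ring
  linarith [hs]
end

section
/- Let c ∈ (0,1] and q ∈ (0,1), and suppose the real number d ≥ 2 satisfies d ≥ (c+1)(1 − √(1 − 4 q c²/(c+1)²)) / (2 q² c²) with 4qc²/(c+1)² ≤ 1. Then q ≥ 1 / (d(c+1) − (c/(c+1))²). -/
/-!
Bounding the square root by its second-order Taylor polynomial, `√(1 - x) ≤ 1 - x/2 - x²/8`,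
turns the hypothesis on `d` into `d ≥ (1/q + (c/(c+1))²)/(c+1)`, and solving this for `q`
gives the claim.
-/

open Real

lemma sqrt_one_sub_le_taylor {x : ℝ} (hx0 : 0 ≤ x) (hx1 : x ≤ 1) :
    √(1 - x) ≤ 1 - x / 2 - x ^ 2 / 8 := by
  rw [sqrt_le_left (by nlinarith)]
  -- the square exceeds `1 - x` by `x³/8 + x⁴/64`
  nlinarith [pow_nonneg hx0 3, pow_nonneg hx0 4]

lemma inv_add_sq_div_le_root {c q : ℝ} (hc : 0 < c) (hq : 0 < q)
    (hx : 4 * q * c ^ 2 / (c + 1) ^ 2 ≤ 1) :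
    (1 / q + (c / (c + 1)) ^ 2) / (c + 1) ≤
      (c + 1) * (1 - √(1 - 4 * q * c ^ 2 / (c + 1) ^ 2)) / (2 * q ^ 2 * c ^ 2) := by
  set x := 4 * q * c ^ 2 / (c + 1) ^ 2 with hx_def
  have hsqrt := sqrt_one_sub_le_taylor (by positivity) hx
  calc (1 / q + (c / (c + 1)) ^ 2) / (c + 1)
      = (c + 1) * (x / 2 + x ^ 2 / 8) / (2 * q ^ 2 * c ^ 2) := by
        rw [hx_def]; field_simp; ring
    _ ≤ (c + 1) * (1 - √(1 - x)) / (2 * q ^ 2 * c ^ 2) := by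
        gcongr; linarith

theorem stmt_13_general (c q d : ℝ) (hc : 0 < c) (hq : 0 < q)
    (hsqrt : 4 * q * c ^ 2 / (c + 1) ^ 2 ≤ 1)
    (h : (c + 1) * (1 - Real.sqrt (1 - 4 * q * c ^ 2 / (c + 1) ^ 2)) / (2 * q ^ 2 * c ^ 2) ≤ d) :
    1 / (d * (c + 1) - (c / (c + 1)) ^ 2) ≤ q := by
  have hd_lower : 1 / q + (c / (c + 1)) ^ 2 ≤ d * (c + 1) :=
    (div_le_iff₀ (by positivity)).mp ((inv_add_sq_div_le_root hc hq hsqrt).trans h)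
  have hq_le : 1 / q ≤ d * (c + 1) - (c / (c + 1)) ^ 2 := by linarith [hd_lower]
  exact (one_div_le ((one_div_pos.mpr hq).trans_le hq_le) hq).mpr hq_le

theorem stmt_13 (c q d : ℝ) (hc : 0 < c) (hc1 : c ≤ 1) (hq : 0 < q) (hq1 : q < 1)
    (hd : 2 ≤ d) (hsqrt : 4 * q * c ^ 2 / (c + 1) ^ 2 ≤ 1)
    (h : (c + 1) * (1 - Real.sqrt (1 - 4 * q * c ^ 2 / (c + 1) ^ 2)) / (2 * q ^ 2 * c ^ 2) ≤ d) :
    1 / (d * (c + 1) - (c / (c + 1)) ^ 2) ≤ q :=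
  stmt_13_general c q d hc hq hsqrt h
end

section
/- Let d ≥ 2 be an integer and c ∈ (0,1]. Define G(q) = ∑_{k ≥ 1} c (dq)^k ∏_{i=1}^{k-1} (1 − c q^i) for q ∈ [0, 1/d). Then G is continuous and strictly increasing on [0, 1/d), G(0) = 0, and G(q) → ∞ as q → 1/d; consequently there is a unique q* ∈ (0, 1/d) with G(q*) = 1. -/
/-!
Each term equals `c d ^ (k + 1) q ∏_{i ≤ k} q (1 - c q ^ i)`, and `q (1 - c q ^ i)` is increasing
on `[0, 1 / 2]` because its slope `1 - c (i + 1) q ^ i` is at least `1 - (i + 1) / 2 ^ i ≥ 0`; so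
every term increases with `q`, the first one `c d q` strictly. On `[0, 1 / 2]` the products
`∏ (1 - c q ^ i)` stay above `1 - q - q ^ 2 ≥ 1 / 4`, hence the series dominates
`(c / 4) ∑ (d q) ^ (k + 1)`, which blows up as `d q → 1`. Continuity is the Weierstrass M-test
with the geometric majorant `(d q) ^ (k + 1)`, and the intermediate value theorem gives the root.
-/

open Finset Filter Topology

/-- The probability that a random time with hazard rate `c q ^ i` at step `i` exceeds `k`. -/
def survival (c q : ℝ) (k : ℕ) : ℝ := ∏ i ∈ Finset.Icc 1 k, (1 - c * q ^ i)

def criticalTerm (c d q : ℝ) (k : ℕ) : ℝ := c * (d * q) ^ (k + 1) * survival c q k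

noncomputable def criticalSeries (c d q : ℝ) : ℝ := ∑' k : ℕ, criticalTerm c d q k

section Survival

variable {c q : ℝ}

lemma one_sub_mul_pow_nonneg (hc1 : c ≤ 1) (hq0 : 0 ≤ q) (hq1 : q ≤ 1) (i : ℕ) :
    0 ≤ 1 - c * q ^ i := by
  nlinarith [pow_le_one₀ hq0 hq1 (n := i), pow_nonneg hq0 i]

lemma survival_nonneg (hc1 : c ≤ 1) (hq0 : 0 ≤ q) (hq1 : q ≤ 1) (k : ℕ) : 0 ≤ survival c q k :=
  prod_nonneg fun i _ => one_sub_mul_pow_nonneg hc1 hq0 hq1 i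

lemma survival_le_one (hc0 : 0 ≤ c) (hc1 : c ≤ 1) (hq0 : 0 ≤ q) (hq1 : q ≤ 1) (k : ℕ) :
    survival c q k ≤ 1 :=
  prod_le_one (fun i _ => one_sub_mul_pow_nonneg hc1 hq0 hq1 i)
    fun i _ => sub_le_self _ (mul_nonneg hc0 (pow_nonneg hq0 i))

/-- A truncation of Euler's pentagonal identity `∏ (1 - q ^ i) = 1 - q - q ^ 2 + q ^ 5 + ⋯`. -/
lemma one_sub_sub_sq_add_pow_le_prod_one_sub_pow (hq0 : 0 ≤ q) (hq1 : q ≤ 1) (k : ℕ) :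
    1 - q - q ^ 2 + q ^ (k + 2) ≤ ∏ i ∈ Finset.Icc 1 (k + 1), (1 - q ^ i) := by
  induction k with
  | zero => simp
  | succ k ih =>
    rw [prod_Icc_succ_top (by omega)]
    have hpow : q ^ (2 * k + 4) ≤ q ^ (k + 4) := pow_le_pow_of_le_one hq0 hq1 (by omega)
    have h1 : 0 ≤ 1 - q ^ (k + 2) := by nlinarith [pow_le_one₀ hq0 hq1 (n := k + 2)]
    have expand : (1 - q - q ^ 2 + q ^ (k + 2)) * (1 - q ^ (k + 2))
        = 1 - q - q ^ 2 + q ^ (k + 1 + 2) + (q ^ (k + 4) - q ^ (2 * k + 4)) := by ring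
    calc 1 - q - q ^ 2 + q ^ (k + 1 + 2)
        ≤ (1 - q - q ^ 2 + q ^ (k + 2)) * (1 - q ^ (k + 2)) := by rw [expand]; linarith
      _ ≤ _ := mul_le_mul_of_nonneg_right ih h1

lemma one_sub_sub_sq_le_survival (hc1 : c ≤ 1) (hq0 : 0 ≤ q) (hq1 : q ≤ 1)
    (k : ℕ) : 1 - q - q ^ 2 ≤ survival c q k := by
  cases k with
  | zero => simp [survival]; nlinarith
  | succ k =>
    calc 1 - q - q ^ 2 ≤ 1 - q - q ^ 2 + q ^ (k + 2) := le_add_of_nonneg_right (by positivity)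
      _ ≤ ∏ i ∈ Finset.Icc 1 (k + 1), (1 - q ^ i) :=
        one_sub_sub_sq_add_pow_le_prod_one_sub_pow hq0 hq1 k
      _ ≤ survival c q (k + 1) := by
        refine prod_le_prod (fun i _ => sub_nonneg.mpr (pow_le_one₀ hq0 hq1)) fun i _ => ?_
        nlinarith [pow_nonneg hq0 i]

end Survival

section Terms

variable {c d q : ℝ}

lemma monotoneOn_mul_one_sub_mul_pow (hc1 : c ≤ 1) (i : ℕ) :
    MonotoneOn (fun q : ℝ => q * (1 - c * q ^ i)) (Set.Icc 0 (1 / 2)) := by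
  rintro a ⟨ha0, -⟩ b ⟨hb0, hb⟩ hab
  have hpow : b ^ (i + 1) - a ^ (i + 1) ≤ (b - a) * (i + 1) * b ^ i := by
    simpa [abs_of_nonneg, ha0, hb0, hab, sub_nonneg] using
      (le_abs_self _).trans (abs_pow_sub_pow_le b a (i + 1))
  -- the slope of `q ^ (i + 1)` on `[0, 1 / 2]` is at most one, since `i + 1 ≤ 2 ^ i`
  have hslope : (i + 1 : ℝ) * b ^ i ≤ 1 := by
    have hi2 : (i + 1 : ℝ) ≤ 2 ^ i := by exact_mod_cast Nat.lt_two_pow_self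
    calc (i + 1 : ℝ) * b ^ i ≤ 2 ^ i * (1 / 2) ^ i := by gcongr
      _ = 1 := by rw [← mul_pow]; norm_num
  have hmono : a ^ (i + 1) ≤ b ^ (i + 1) := by gcongr
  have hba : 0 ≤ b - a := sub_nonneg.mpr hab
  have hincr : c * (b ^ (i + 1) - a ^ (i + 1)) ≤ b - a :=
    calc c * (b ^ (i + 1) - a ^ (i + 1)) ≤ b ^ (i + 1) - a ^ (i + 1) :=
          mul_le_of_le_one_left (sub_nonneg.mpr hmono) hc1
      _ ≤ (b - a) * ((i + 1) * b ^ i) := by linarith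
      _ ≤ b - a := mul_le_of_le_one_right hba hslope
  simp only
  linear_combination hincr

lemma criticalTerm_eq_mul_prod (c d q : ℝ) (k : ℕ) :
    criticalTerm c d q k = c * d ^ (k + 1) * q * ∏ i ∈ Finset.Icc 1 k, (q * (1 - c * q ^ i)) := by
  rw [criticalTerm, survival, prod_mul_distrib, prod_const, Nat.card_Icc, Nat.add_sub_cancel]
  ring

lemma monotoneOn_criticalTerm (hc0 : 0 ≤ c) (hc1 : c ≤ 1) (hd : 0 ≤ d) (k : ℕ) :
    MonotoneOn (criticalTerm c d · k) (Set.Icc 0 (1 / 2)) := by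
  intro a ha b hb hab
  have hfactor_nonneg : ∀ i, 0 ≤ a * (1 - c * a ^ i) := fun i =>
    mul_nonneg ha.1 (one_sub_mul_pow_nonneg hc1 ha.1 (by linarith [ha.2]) i)
  have hb0 : 0 ≤ b := hb.1
  simp only [criticalTerm_eq_mul_prod]
  exact mul_le_mul (by gcongr) (prod_le_prod (fun i _ => hfactor_nonneg i) fun i _ =>
      monotoneOn_mul_one_sub_mul_pow hc1 i ha hb hab)
    (prod_nonneg fun i _ => hfactor_nonneg i) (by positivity)

lemma criticalTerm_nonneg (hc0 : 0 ≤ c) (hc1 : c ≤ 1) (hd : 0 ≤ d) (hq0 : 0 ≤ q) (hq1 : q ≤ 1)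
    (k : ℕ) : 0 ≤ criticalTerm c d q k := by
  rw [criticalTerm]
  have := survival_nonneg hc1 hq0 hq1 k
  positivity

lemma criticalTerm_le_pow (hc0 : 0 ≤ c) (hc1 : c ≤ 1) (hd : 0 ≤ d) (hq0 : 0 ≤ q) (hq1 : q ≤ 1)
    (k : ℕ) : criticalTerm c d q k ≤ (d * q) ^ (k + 1) := by
  have hP := survival_le_one hc0 hc1 hq0 hq1 k
  have hP0 := survival_nonneg hc1 hq0 hq1 k
  have hx : 0 ≤ (d * q) ^ (k + 1) := by positivity
  calc criticalTerm c d q k ≤ 1 * (d * q) ^ (k + 1) * 1 := by unfold criticalTerm; gcongr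
    _ = (d * q) ^ (k + 1) := by ring

lemma continuous_criticalTerm (c d : ℝ) (k : ℕ) : Continuous (criticalTerm c d · k) := by
  unfold criticalTerm survival
  fun_prop

lemma summable_pow_succ {x : ℝ} (hx0 : 0 ≤ x) (hx1 : x < 1) : Summable fun k : ℕ => x ^ (k + 1) :=
  (summable_nat_add_iff 1).mpr (summable_geometric_of_lt_one hx0 hx1)

lemma summable_criticalTerm (hc0 : 0 ≤ c) (hc1 : c ≤ 1) (hd : 0 ≤ d) (hq0 : 0 ≤ q) (hq1 : q ≤ 1)
    (hdq : d * q < 1) : Summable (criticalTerm c d q) :=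
  (summable_pow_succ (by positivity) hdq).of_nonneg_of_le (criticalTerm_nonneg hc0 hc1 hd hq0 hq1)
    (criticalTerm_le_pow hc0 hc1 hd hq0 hq1)

end Terms

section CriticalSeries

variable {c d : ℝ}

lemma criticalSeries_zero (c d : ℝ) : criticalSeries c d 0 = 0 := by
  simp [criticalSeries, criticalTerm]

lemma continuousOn_criticalSeries (hc0 : 0 ≤ c) (hc1 : c ≤ 1) (hd : 1 ≤ d) :
    ContinuousOn (criticalSeries c d) (Set.Ico 0 (1 / d)) := by
  refine continuousOn_of_locally_continuousOn fun q hq => ?_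
  obtain ⟨r, hqr, hr⟩ := exists_between hq.2
  have hr0 : 0 ≤ r := hq.1.trans hqr.le
  have hdr : d * r < 1 := by rwa [lt_div_iff₀ (by positivity), mul_comm] at hr
  refine ⟨Set.Iio r, isOpen_Iio, hqr,
    continuousOn_tsum (fun k => (continuous_criticalTerm c d k).continuousOn)
      (summable_pow_succ (by positivity) hdr) fun k x hx => ?_⟩
  have hx1 : x ≤ 1 := hx.2.le.trans (hr.le.trans (div_le_one_of_le₀ hd (by positivity)))
  rw [Real.norm_of_nonneg (criticalTerm_nonneg hc0 hc1 (by positivity) hx.1.1 hx1 k)]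
  calc _ ≤ (d * x) ^ (k + 1) := criticalTerm_le_pow hc0 hc1 (by positivity) hx.1.1 hx1 k
    _ ≤ (d * r) ^ (k + 1) := by have := hx.1.1; gcongr; exact hx.2.le

lemma strictMonoOn_criticalSeries (hc0 : 0 < c) (hc1 : c ≤ 1) (hd : 2 ≤ d) :
    StrictMonoOn (criticalSeries c d) (Set.Ico 0 (1 / d)) := by
  have hd0 : 0 < d := by linarith
  have hsub : Set.Ico 0 (1 / d) ⊆ Set.Icc 0 (1 / 2) := fun q hq =>
    ⟨hq.1, hq.2.le.trans (one_div_le_one_div_of_le two_pos hd)⟩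
  intro a ha b hb hab
  have ha1 : a ≤ 1 := (hsub ha).2.trans (by norm_num)
  have hb1 : b ≤ 1 := (hsub hb).2.trans (by norm_num)
  refine Summable.tsum_lt_tsum_of_nonneg (i := 0) (criticalTerm_nonneg hc0.le hc1 hd0.le ha.1 ha1)
    (fun k => monotoneOn_criticalTerm hc0.le hc1 hd0.le k (hsub ha) (hsub hb) hab.le) ?_
    (summable_criticalTerm hc0.le hc1 hd0.le hb.1 hb1 ((lt_div_iff₀' hd0).mp hb.2))
  simpa [criticalTerm, survival] using mul_lt_mul_of_pos_left (mul_lt_mul_of_pos_left hab hd0) hc0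

lemma le_criticalSeries (hc0 : 0 ≤ c) (hc1 : c ≤ 1) (hd : 0 ≤ d) {q : ℝ} (hq0 : 0 ≤ q)
    (hq : q ≤ 1 / 2) (hdq : d * q < 1) : c / 4 * ((1 - d * q)⁻¹ - 1) ≤ criticalSeries c d q := by
  have hx0 : 0 ≤ d * q := by positivity
  have hgeom : ∑' k : ℕ, (d * q) ^ (k + 1) = (1 - d * q)⁻¹ - 1 := by
    rw [← tsum_geometric_of_lt_one hx0 hdq,
      (summable_geometric_of_lt_one hx0 hdq).tsum_eq_zero_add, pow_zero, add_sub_cancel_left]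
  rw [← hgeom, ← tsum_mul_left]
  refine Summable.tsum_le_tsum (fun k => ?_) ((summable_pow_succ hx0 hdq).mul_left _)
    (summable_criticalTerm hc0 hc1 hd hq0 (by linarith) hdq)
  have hP : 1 / 4 ≤ survival c q k := by
    nlinarith [one_sub_sub_sq_le_survival hc1 hq0 (by linarith) k]
  calc c / 4 * (d * q) ^ (k + 1) = c * (d * q) ^ (k + 1) * (1 / 4) := by ring
    _ ≤ criticalTerm c d q k := by unfold criticalTerm; gcongr

lemma tendsto_criticalSeries (hc0 : 0 < c) (hc1 : c ≤ 1) (hd : 2 ≤ d) :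
    Tendsto (criticalSeries c d) (𝓝[<] (1 / d)) atTop := by
  have hd0 : 0 < d := by linarith
  have hgap : Tendsto (fun q => 1 - d * q) (𝓝[<] (1 / d)) (𝓝[>] 0) := by
    refine tendsto_nhdsWithin_of_tendsto_nhds_of_eventually_within _ ?_ ?_
    · have : Tendsto (fun q => 1 - d * q) (𝓝 (1 / d)) (𝓝 (1 - d * (1 / d))) :=
        (continuous_const.sub (continuous_const.mul continuous_id)).tendsto _
      rw [mul_one_div_cancel hd0.ne', sub_self] at this
      exact this.mono_left nhdsWithin_le_nhds
    · filter_upwards [self_mem_nhdsWithin] with q hq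
      exact sub_pos.mpr ((lt_div_iff₀' hd0).mp hq)
  have hlower : Tendsto (fun q => c / 4 * ((1 - d * q)⁻¹ - 1)) (𝓝[<] (1 / d)) atTop :=
    (tendsto_atTop_add_const_right _ (-1) (tendsto_inv_nhdsGT_zero.comp hgap)).const_mul_atTop
      (by positivity)
  refine tendsto_atTop_mono' _ ?_ hlower
  filter_upwards [Ioo_mem_nhdsLT (by positivity : (0 : ℝ) < 1 / d)] with q hq
  exact le_criticalSeries hc0.le hc1 hd0.le hq.1.le
    (hq.2.le.trans (one_div_le_one_div_of_le two_pos hd)) ((lt_div_iff₀' hd0).mp hq.2)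

end CriticalSeries

theorem existsUnique_mem_Ioo_eq_of_strictMonoOn {α β : Type*}
    [ConditionallyCompleteLinearOrder α] [TopologicalSpace α] [OrderTopology α]
    [DenselyOrdered α] [LinearOrder β] [TopologicalSpace β] [OrderClosedTopology β]
    {f : α → β} {a b : α} {y : β} (hab : a < b) (hf : ContinuousOn f (Set.Ico a b))
    (hmono : StrictMonoOn f (Set.Ico a b)) (hfa : f a < y) (hlim : Tendsto f (𝓝[<] b) atTop) :
    ∃! x, x ∈ Set.Ioo a b ∧ f x = y := by
  have := nhdsLT_neBot_of_exists_lt ⟨a, hab⟩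
  obtain ⟨b', hyb', hb'⟩ := ((hlim.eventually_ge_atTop y).and (Ioo_mem_nhdsLT hab)).exists
  obtain ⟨x, hx, rfl⟩ :=
    intermediate_value_Icc hb'.1.le (hf.mono (Set.Icc_subset_Ico_right hb'.2)) ⟨hfa.le, hyb'⟩
  have hxa : a < x := hx.1.lt_of_ne (by rintro rfl; exact hfa.false)
  have hxb : x < b := hx.2.trans_lt hb'.2
  exact ⟨x, ⟨⟨hxa, hxb⟩, rfl⟩, fun z ⟨hz, hfz⟩ =>
    hmono.injOn ⟨hz.1.le, hz.2⟩ ⟨hxa.le, hxb⟩ hfz⟩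

theorem stmt_18 (d : ℕ) (hd : 2 ≤ d) (c : ℝ) (hc : 0 < c) (hc1 : c ≤ 1)
    (G : ℝ → ℝ)
    (hG : ∀ q, G q = ∑' k : ℕ, c * ((d : ℝ) * q) ^ (k + 1) * ∏ i ∈ Finset.Icc 1 k, (1 - c * q ^ i)) :
    ContinuousOn G (Set.Ico 0 (1 / (d : ℝ))) ∧
    StrictMonoOn G (Set.Ico 0 (1 / (d : ℝ))) ∧
    G 0 = 0 ∧
    Filter.Tendsto G (nhdsWithin (1 / (d : ℝ)) (Set.Iio (1 / (d : ℝ)))) Filter.atTop ∧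
    ∃! q : ℝ, q ∈ Set.Ioo 0 (1 / (d : ℝ)) ∧ G q = 1 := by
  obtain rfl : G = criticalSeries c d := funext hG
  have hd' : (2 : ℝ) ≤ d := by exact_mod_cast hd
  have hcont := continuousOn_criticalSeries hc.le hc1 (one_le_two.trans hd')
  have hmono := strictMonoOn_criticalSeries hc hc1 hd'
  have hlim := tendsto_criticalSeries hc hc1 hd'
  refine ⟨hcont, hmono, criticalSeries_zero c d, hlim, ?_⟩
  exact existsUnique_mem_Ioo_eq_of_strictMonoOn (by positivity) hcont hmono
    (by rw [criticalSeries_zero]; exact one_pos) hlim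
end

section
/- Let d ≥ 2 be an integer. If q ∈ (0, 1/d) satisfies ∑_{k ≥ 1} (dq)^k ∏_{i=1}^{k-1} (1 − q^i) = 1 (the case c = 1 of the criticality equation), then 1/(2d − 1/4) ≤ q holds for all d ≥ 2, i.e., q ≥ 4/(8d − 1). -/
/-!
Write `x = d q`. Every product `∏_{i=1}^{k} (1 - q^i)` with `k ≥ 1` is at most `1 - q`, so comparing
the critical series with a geometric one gives `1 ≤ x + (1 - q) x² / (1 - x)`, i.e.
`1 + q x² ≤ 2x`. Hence `x ≥ 1/2`, so `q x² ≥ q/4` and `1 + q/4 ≤ 2 d q`.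
-/

open Finset

section OneSubPow

variable {R : Type*} [CommRing R] [LinearOrder R] [IsStrictOrderedRing R] {q : R}

lemma prod_one_sub_pow_nonneg (hq₀ : 0 ≤ q) (hq₁ : q ≤ 1) (s : Finset ℕ) :
    0 ≤ ∏ i ∈ s, (1 - q ^ i) :=
  prod_nonneg fun _ _ => sub_nonneg.2 (pow_le_one₀ hq₀ hq₁)

lemma prod_one_sub_pow_le_one (hq₀ : 0 ≤ q) (hq₁ : q ≤ 1) (s : Finset ℕ) :
    ∏ i ∈ s, (1 - q ^ i) ≤ 1 :=
  prod_le_one (fun _ _ => sub_nonneg.2 (pow_le_one₀ hq₀ hq₁))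
    fun i _ => sub_le_self 1 (pow_nonneg hq₀ i)

lemma prod_Icc_one_sub_pow_le_one_sub (hq₀ : 0 ≤ q) (hq₁ : q ≤ 1) {k : ℕ} (hk : 1 ≤ k) :
    ∏ i ∈ Icc 1 k, (1 - q ^ i) ≤ 1 - q := by
  rw [← insert_Icc_add_one_left_eq_Icc hk, prod_insert (by simp), pow_one]
  exact mul_le_of_le_one_right (sub_nonneg.2 hq₁) (prod_one_sub_pow_le_one hq₀ hq₁ _)

end OneSubPow

lemma tsum_pow_succ_mul_prod_one_sub_pow_le {x q : ℝ} (hx₀ : 0 ≤ x) (hx₁ : x < 1)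
    (hq₀ : 0 ≤ q) (hq₁ : q ≤ 1) :
    ∑' k : ℕ, x ^ (k + 1) * ∏ i ∈ Icc 1 k, (1 - q ^ i) ≤ x + (1 - q) * x ^ 2 / (1 - x) := by
  set a : ℕ → ℝ := fun k => x ^ (k + 1) * ∏ i ∈ Icc 1 k, (1 - q ^ i)
  have hgeo : Summable (x ^ ·) := summable_geometric_of_lt_one hx₀ hx₁
  have ha : Summable a := by
    refine Summable.of_nonneg_of_le (fun k => ?_) (fun k => ?_) (hgeo.mul_left x)
    · exact mul_nonneg (pow_nonneg hx₀ _) (prod_one_sub_pow_nonneg hq₀ hq₁ _)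
    · rw [← pow_succ']
      exact mul_le_of_le_one_right (pow_nonneg hx₀ _) (prod_one_sub_pow_le_one hq₀ hq₁ _)
  have htail : ∀ k : ℕ, a (k + 1) ≤ (1 - q) * x ^ 2 * x ^ k := fun k => by
    calc a (k + 1) ≤ x ^ (k + 2) * (1 - q) :=
          mul_le_mul_of_nonneg_left (prod_Icc_one_sub_pow_le_one_sub hq₀ hq₁ (by omega))
            (pow_nonneg hx₀ _)
      _ = (1 - q) * x ^ 2 * x ^ k := by ring
  calc ∑' k, a k = a 0 + ∑' k, a (k + 1) := ha.tsum_eq_zero_add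
    _ ≤ x + ∑' k : ℕ, (1 - q) * x ^ 2 * x ^ k :=
        add_le_add (by simp [a])
          ((summable_nat_add_iff 1).2 ha |>.tsum_le_tsum htail (hgeo.mul_left _))
    _ = x + (1 - q) * x ^ 2 / (1 - x) := by
        rw [tsum_mul_left, tsum_geometric_of_lt_one hx₀ hx₁, div_eq_mul_inv]

lemma one_add_mul_sq_le_two_mul {x q : ℝ} (hx₁ : x < 1)
    (h : 1 ≤ x + (1 - q) * x ^ 2 / (1 - x)) : 1 + q * x ^ 2 ≤ 2 * x := by
  have h1x : 0 < 1 - x := sub_pos.2 hx₁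
  rw [← sub_le_iff_le_add', le_div_iff₀ h1x] at h
  nlinarith

theorem stmt_19_general (d : ℕ) (q : ℝ) (hq : 0 < q) (hqd : q < 1 / (d : ℝ))
    (hcrit : ∑' k : ℕ, ((d : ℝ) * q) ^ (k + 1) * ∏ i ∈ Finset.Icc 1 k, (1 - q ^ i) = 1) :
    1 / (2 * (d : ℝ) - 1 / 4) ≤ q := by
  have hd : (1 : ℝ) ≤ d := Nat.one_le_cast.2 (Nat.cast_pos.1 (one_div_pos.1 (hq.trans hqd)))
  have hx₁ : (d : ℝ) * q < 1 := by rwa [lt_div_iff₀' (by linarith)] at hqd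
  have hq₁ : q ≤ 1 := by nlinarith
  have hkey := one_add_mul_sq_le_two_mul hx₁
    (hcrit ▸ tsum_pow_succ_mul_prod_one_sub_pow_le (by positivity) hx₁ hq.le hq₁)
  have hx_half : 1 ≤ 2 * ((d : ℝ) * q) := by nlinarith [sq_nonneg ((d : ℝ) * q)]
  have hq4 : q / 4 ≤ q * ((d : ℝ) * q) ^ 2 := by nlinarith
  rw [div_le_iff₀ (by linarith)]
  linarith

theorem stmt_19 (d : ℕ) (hd : 2 ≤ d) (q : ℝ) (hq : 0 < q) (hqd : q < 1 / (d : ℝ))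
    (hcrit : ∑' k : ℕ, ((d : ℝ) * q) ^ (k + 1) * ∏ i ∈ Finset.Icc 1 k, (1 - q ^ i) = 1) :
    1 / (2 * (d : ℝ) - 1 / 4) ≤ q :=
  stmt_19_general d q hq hqd hcrit
end
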